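/- arXiv:2105.13002 — 4 statements merged into one kernel-verified Lean document; each statement's English description precedes it below -/
import Mathlib

section
/- Let ψ(m,p) = E[X²] + m² p − 2 m ∫_{1−p}^{1} Q(t) dt where Q is the quantile function of a square-integrable nonnegative random variable X. If (m_X, p_X) with m_X ≠ 0, p_X ∈ (0,1) is a critical point of ψ, then m_X = 2 Q(1 − p_X) and m_X = (1/p_X) ∫_{1−p_X}^{1} Q(t) dt. -/
/-!
`ψ` is quadratic in `m`, so `∂ₘψ = 2mp − 2∫_{1−p}^1 Q`; by the fundamental theorem of calculus
at the continuity point `1 − p` of `Q`, `∂ₚψ = m² − 2mQ(1−p)`. Setting both to zero and dividing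
by `p ≠ 0`, respectively `m ≠ 0`, gives the two identities.
-/

open MeasureTheory Topology

theorem IntervalIntegrable.stronglyMeasurableAtFilter_nhds {E : Type*} [NormedAddCommGroup E]
    {f : ℝ → E} {a b x : ℝ} (hf : IntervalIntegrable f volume a b) (hx : x ∈ Set.Ioo a b) :
    StronglyMeasurableAtFilter f (𝓝 x) :=
  AEStronglyMeasurable.stronglyMeasurableAtFilter_of_mem
    (hf.1.mono_set Set.Ioo_subset_Ioc_self).aestronglyMeasurable (isOpen_Ioo.mem_nhds hx)

theorem hasDerivAt_intervalIntegral_sub_left {E : Type*} [NormedAddCommGroup E] [NormedSpace ℝ E]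
    [CompleteSpace E] {f : ℝ → E} {b p : ℝ} (hf : IntervalIntegrable f volume (b - p) b)
    (hmeas : StronglyMeasurableAtFilter f (𝓝 (b - p))) (hc : ContinuousAt f (b - p)) :
    HasDerivAt (fun q => ∫ t in (b - q)..b, f t) (f (b - p)) p := by
  simpa [Function.comp_def] using
    (intervalIntegral.integral_hasDerivAt_left hf hmeas hc).scomp p
      ((hasDerivAt_id' p).const_sub b)

theorem eq_div_of_hasDerivAt_quadratic_eq_zero {C p I m : ℝ} (hp : p ≠ 0)
    (h : HasDerivAt (fun m => C + m ^ 2 * p - 2 * m * I) 0 m) : m = I / p := by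
  have hderiv : HasDerivAt (fun m => C + m ^ 2 * p - 2 * m * I) (2 * m * p - 2 * I) m :=
    ((((hasDerivAt_pow 2 m).mul_const p).const_add C).sub
      (((hasDerivAt_id' m).const_mul 2).mul_const I)).congr_deriv (by norm_num)
  have hzero : 2 * m * p - 2 * I = 0 := hderiv.unique h
  field_simp
  linarith

theorem eq_two_mul_of_hasDerivAt_eq_zero {C m p q : ℝ} {F : ℝ → ℝ} (hm : m ≠ 0)
    (hF : HasDerivAt F q p) (h : HasDerivAt (fun p => C + m ^ 2 * p - 2 * m * F p) 0 p) :
    m = 2 * q := by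
  have hderiv : HasDerivAt (fun p => C + m ^ 2 * p - 2 * m * F p) (m * (m - 2 * q)) p :=
    ((((hasDerivAt_id' p).const_mul (m ^ 2)).const_add C).sub (hF.const_mul (2 * m))).congr_deriv
      (by ring)
  have hzero : m * (m - 2 * q) = 0 := hderiv.unique h
  linarith [(mul_eq_zero.mp hzero).resolve_left hm]

theorem critical_point_magnitude_propensity_general
    {Ω : Type*} [MeasurableSpace Ω] (P : Measure Ω)
    (X : Ω → ℝ)
    (Q : ℝ → ℝ)
    (hQi : IntervalIntegrable Q volume 0 1)
    (ψ : ℝ → ℝ → ℝ)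
    (hψ : ∀ m p, ψ m p =
      (∫ ω, (X ω) ^ 2 ∂P) + m ^ 2 * p - 2 * m * ∫ t in (1 - p)..1, Q t)
    (m_X p_X : ℝ) (hm : m_X ≠ 0) (hp : p_X ∈ Set.Ioo (0 : ℝ) 1)
    (hQc : ContinuousAt Q (1 - p_X))
    (hcrit_m : HasDerivAt (fun m => ψ m p_X) 0 m_X)
    (hcrit_p : HasDerivAt (fun p => ψ m_X p) 0 p_X) :
    m_X = 2 * Q (1 - p_X) ∧ m_X = (∫ t in (1 - p_X)..1, Q t) / p_X := by
  obtain ⟨hp0, hp1⟩ := hp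
  simp only [hψ] at hcrit_m hcrit_p
  have hQi_tail : IntervalIntegrable Q volume (1 - p_X) 1 :=
    hQi.mono_set (Set.uIcc_subset_uIcc (Set.mem_uIcc_of_le (by linarith) (by linarith))
      Set.right_mem_uIcc)
  have hQmeas : StronglyMeasurableAtFilter Q (𝓝 (1 - p_X)) :=
    hQi.stronglyMeasurableAtFilter_nhds ⟨by linarith, by linarith⟩
  have htail := hasDerivAt_intervalIntegral_sub_left hQi_tail hQmeas hQc
  exact ⟨eq_two_mul_of_hasDerivAt_eq_zero hm htail hcrit_p,
    eq_div_of_hasDerivAt_quadratic_eq_zero hp0.ne' hcrit_m⟩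

/-- First-order conditions: if `(m_X, p_X)` with `m_X ≠ 0`, `p_X ∈ (0,1)` is a critical
point of `ψ(m,p) = E[X²] + m²p − 2m∫_{1−p}^1 Q(t)dt`, then `m_X = 2Q(1−p_X)` and
`m_X = (1/p_X)∫_{1−p_X}^1 Q(t)dt`. -/
theorem critical_point_magnitude_propensity
    {Ω : Type*} [MeasurableSpace Ω] (P : Measure Ω) [IsProbabilityMeasure P]
    (X : Ω → ℝ) (hXm : Measurable X) (hX0 : ∀ ω, 0 ≤ X ω) (hX2 : MemLp X 2 P)
    (Q : ℝ → ℝ)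
    (hQ : ∀ t ∈ Set.Ioo (0 : ℝ) 1,
      Q t = sInf {x : ℝ | ENNReal.ofReal t ≤ P.map X (Set.Iic x)})
    (hQi : IntervalIntegrable Q volume 0 1)
    (ψ : ℝ → ℝ → ℝ)
    (hψ : ∀ m p, ψ m p =
      (∫ ω, (X ω) ^ 2 ∂P) + m ^ 2 * p - 2 * m * ∫ t in (1 - p)..1, Q t)
    (m_X p_X : ℝ) (hm : m_X ≠ 0) (hp : p_X ∈ Set.Ioo (0 : ℝ) 1)
    (hQc : ContinuousAt Q (1 - p_X))
    (hcrit_m : HasDerivAt (fun m => ψ m p_X) 0 m_X)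
    (hcrit_p : HasDerivAt (fun p => ψ m_X p) 0 p_X) :
    m_X = 2 * Q (1 - p_X) ∧ m_X = (∫ t in (1 - p_X)..1, Q t) / p_X :=
  critical_point_magnitude_propensity_general P X Q hQi ψ hψ m_X p_X hm hp hQc hcrit_m hcrit_p
end

section
/- Let X have Pareto law P(X > x) = (1+x)^{−θ} for x ≥ 0 with θ > 2. Then E[X | X > a] = (θ/(θ−1))(1+a) − 1 for a ≥ 0, the unique nonnegative solution of 2a = E[X | X > a] is a = 1/(θ−2), and the optimal magnitude-propensity pair is m_X = 2/(θ−2), p_X = ((θ−2)/(θ−1))^θ. -/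
/-!
By the layer-cake formula, `E[(X - a)⁺] = ∫_{t > 0} P(X > a + t) dt`, so
`E[X · 1_{X > a}] = a P(X > a) + ∫_{t > 0} (1 + a + t)^{-θ} dt = a (1+a)^{-θ} + (1+a)^{1-θ}/(θ-1)`,
and dividing by `P(X > a) = (1+a)^{-θ}` gives the conditional mean, which is affine in `a`;
the equation `2a = E[X | X > a]` is then linear, with root `1/(θ-2)`.
-/

open MeasureTheory Set Filter Topology ENNReal

theorem integral_Ioi_add_rpow_of_lt {a c m : ℝ} (ha : a < -1) (hc : -m < c) :
    ∫ x in Ioi c, (x + m) ^ a = -(c + m) ^ (a + 1) / (a + 1) := by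
  have hd : ∀ x ∈ Ici c, HasDerivAt (fun t ↦ (t + m) ^ (a + 1) / (a + 1)) ((x + m) ^ a) x := by
    intro x hx
    have hpos : x + m ≠ 0 := by linarith [mem_Ici.mp hx]
    convert! (((hasDerivAt_id' x).add_const m).rpow_const (Or.inl hpos)).div_const (a + 1) using 1
    simp [show a + 1 ≠ 0 by linarith]
  have ht : Tendsto (fun t ↦ (t + m) ^ (a + 1) / (a + 1)) atTop (𝓝 (0 / (a + 1))) := by
    rw [← neg_neg (a + 1)]
    exact (tendsto_rpow_neg_atTop (by linarith)).comp
      (tendsto_atTop_add_const_right _ m tendsto_id) |>.div_const _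
  rw [integral_Ioi_of_hasDerivAt_of_tendsto' hd (integrableOn_add_rpow_Ioi_of_lt ha hc) ht]
  ring

theorem setIntegral_Ioi_eq_mul_measureReal_add_integral_tail {μ : Measure ℝ} {a : ℝ}
    (hfin : μ (Ioi a) ≠ ∞) (htail : IntegrableOn (fun t ↦ μ.real (Ioi (a + t))) (Ioi 0)) :
    ∫ x in Ioi a, x ∂μ = a * μ.real (Ioi a) + ∫ t in Ioi 0, μ.real (Ioi (a + t)) := by
  set ν := μ.restrict (Ioi a)
  have hexcess_nonneg : 0 ≤ᵐ[ν] fun x ↦ x - a := by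
    filter_upwards [ae_restrict_mem measurableSet_Ioi] with x hx
    exact sub_nonneg.2 (le_of_lt hx)
  have hlevel : ∀ t ∈ Ioi (0 : ℝ), ν {x | t < x - a} = μ (Ioi (a + t)) := by
    intro t ht
    rw [Measure.restrict_apply' measurableSet_Ioi]
    congr 1
    ext x
    simp only [mem_inter_iff, mem_ofPred_eq, mem_Ioi]
    constructor
    · rintro ⟨h, -⟩; linarith
    · intro h; exact ⟨by linarith, by linarith [mem_Ioi.1 ht]⟩
  have hlintegral : ∫⁻ x, ENNReal.ofReal (x - a) ∂ν
      = ENNReal.ofReal (∫ t in Ioi 0, μ.real (Ioi (a + t))) := by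
    rw [lintegral_eq_lintegral_meas_lt ν hexcess_nonneg (by fun_prop),
      setLIntegral_congr_fun measurableSet_Ioi hlevel,
      ofReal_integral_eq_lintegral_ofReal htail (Eventually.of_forall fun t ↦ measureReal_nonneg)]
    refine setLIntegral_congr_fun measurableSet_Ioi fun t ht ↦ (ofReal_measureReal ?_).symm
    exact ne_top_of_le_ne_top hfin (measure_mono (Ioi_subset_Ioi (by linarith [mem_Ioi.1 ht])))
  have hexcess_int : Integrable (fun x ↦ x - a) ν := by
    refine ⟨by fun_prop, ?_⟩
    rw [hasFiniteIntegral_iff_ofReal hexcess_nonneg, hlintegral]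
    exact ENNReal.ofReal_lt_top
  have hν : IsFiniteMeasure ν := isFiniteMeasure_restrict.2 hfin
  calc ∫ x, x ∂ν = ∫ x, ((x - a) + a) ∂ν := by simp
    _ = ∫ x, (x - a) ∂ν + a * ν.real univ := by
        rw [integral_add hexcess_int (integrable_const a), integral_const, smul_eq_mul, mul_comm]
    _ = a * μ.real (Ioi a) + ∫ t in Ioi 0, μ.real (Ioi (a + t)) := by
        rw [hexcess_int.integral_eq_integral_meas_lt hexcess_nonneg,
          measureReal_restrict_apply_univ, add_comm, mul_comm]
        congr 1
        refine setIntegral_congr_fun measurableSet_Ioi fun t ht ↦ ?_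
        simp only [measureReal_def, hlevel t ht]

section Pareto

variable {θ : ℝ} {μ : Measure ℝ}

theorem pareto_measureReal_Ioi
    (hsurv : ∀ x : ℝ, 0 ≤ x → μ (Ioi x) = ENNReal.ofReal ((1 + x) ^ (-θ))) {x : ℝ} (hx : 0 ≤ x) :
    μ.real (Ioi x) = (1 + x) ^ (-θ) := by
  rw [measureReal_def, hsurv x hx, ENNReal.toReal_ofReal (by positivity)]

theorem pareto_setIntegral_Ioi
    (hsurv : ∀ x : ℝ, 0 ≤ x → μ (Ioi x) = ENNReal.ofReal ((1 + x) ^ (-θ))) (hθ : 1 < θ)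
    {a : ℝ} (ha : 0 ≤ a) :
    ∫ x in Ioi a, x ∂μ = a * (1 + a) ^ (-θ) + (1 + a) ^ (1 - θ) / (θ - 1) := by
  have htail : EqOn (fun t ↦ μ.real (Ioi (a + t))) (fun t ↦ (t + (1 + a)) ^ (-θ)) (Ioi 0) :=
    fun t ht ↦ by
      dsimp only
      rw [pareto_measureReal_Ioi hsurv (by linarith [mem_Ioi.1 ht]),
        show 1 + (a + t) = t + (1 + a) by ring]
  have hexp : -θ < -1 := by linarith
  have hshift : -(1 + a) < 0 := by linarith
  rw [setIntegral_Ioi_eq_mul_measureReal_add_integral_tail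
      (by rw [hsurv a ha]; exact ENNReal.ofReal_ne_top)
      ((integrableOn_add_rpow_Ioi_of_lt hexp hshift).congr_fun htail.symm measurableSet_Ioi),
    setIntegral_congr_fun measurableSet_Ioi htail, integral_Ioi_add_rpow_of_lt hexp hshift,
    pareto_measureReal_Ioi hsurv ha]
  rw [show -θ + 1 = 1 - θ by ring, zero_add, neg_div, ← div_neg, neg_sub]

theorem pareto_conditional_mean
    (hsurv : ∀ x : ℝ, 0 ≤ x → μ (Ioi x) = ENNReal.ofReal ((1 + x) ^ (-θ))) (hθ : 1 < θ)
    {a : ℝ} (ha : 0 ≤ a) :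
    (∫ x in Ioi a, x ∂μ) / (μ (Ioi a)).toReal = θ / (θ - 1) * (1 + a) - 1 := by
  have h1a : 0 < 1 + a := by linarith
  have hsplit : (1 + a) ^ (1 - θ) = (1 + a) * (1 + a) ^ (-θ) := by
    rw [sub_eq_add_neg, Real.rpow_add h1a, Real.rpow_one]
  have hθ1 : θ - 1 ≠ 0 := by linarith
  rw [← measureReal_def, pareto_measureReal_Ioi hsurv ha, pareto_setIntegral_Ioi hsurv hθ ha,
    hsplit]
  field_simp
  ring

end Pareto

theorem two_mul_eq_pareto_conditional_mean_iff {θ : ℝ} (hθ : 2 < θ) (a : ℝ) :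
    2 * a = θ / (θ - 1) * (1 + a) - 1 ↔ a = 1 / (θ - 2) := by
  have hθ1 : θ - 1 ≠ 0 := by linarith
  have hθ2 : θ - 2 ≠ 0 := by linarith
  rw [eq_div_iff hθ2, div_mul_eq_mul_div, eq_sub_iff_add_eq, eq_div_iff hθ1]
  constructor <;> intro h <;> linarith

theorem one_add_one_div_sub_two_rpow_neg {θ : ℝ} (hθ : 2 < θ) :
    (1 + 1 / (θ - 2)) ^ (-θ) = ((θ - 2) / (θ - 1)) ^ θ := by
  have hθ2 : θ - 2 ≠ 0 := by linarith
  have hbase : 1 + 1 / (θ - 2) = ((θ - 2) / (θ - 1))⁻¹ := by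
    field_simp
    ring
  rw [hbase, Real.rpow_neg_eq_inv_rpow, inv_inv]

theorem magnitude_propensity_pareto_general
    (θ : ℝ) (hθ : 2 < θ) (μ : Measure ℝ)
    (hsurv : ∀ x : ℝ, 0 ≤ x → μ (Set.Ioi x) = ENNReal.ofReal ((1 + x) ^ (-θ))) :
    (∀ a : ℝ, 0 ≤ a →
      (∫ x in Set.Ioi a, x ∂μ) / (μ (Set.Ioi a)).toReal = θ / (θ - 1) * (1 + a) - 1) ∧
    (∀ a : ℝ, 0 ≤ a →
      (2 * a = (∫ x in Set.Ioi a, x ∂μ) / (μ (Set.Ioi a)).toReal ↔ a = 1 / (θ - 2))) ∧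
    (2 * (1 / (θ - 2)) = 2 / (θ - 2) ∧
      μ (Set.Ioi (1 / (θ - 2))) = ENNReal.ofReal (((θ - 2) / (θ - 1)) ^ θ)) := by
  have hmean := fun a (ha : 0 ≤ a) ↦ pareto_conditional_mean hsurv (by linarith) ha
  refine ⟨hmean, fun a ha ↦ ?_, by ring, ?_⟩
  · rw [hmean a ha]
    exact two_mul_eq_pareto_conditional_mean_iff hθ a
  · rw [hsurv _ (one_div_nonneg.2 (by linarith)), one_add_one_div_sub_two_rpow_neg hθ]

/-- For `X ~ Pa(θ)` with survival function `(1+x)^{−θ}`, `θ > 2`: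
`E[X | X > a] = (θ/(θ−1))(1+a) − 1` for all `a ≥ 0`, the unique nonnegative solution of
`2a = E[X | X > a]` is `a = 1/(θ−2)`, and the magnitude-propensity pair `(2a, P(X > a))`
is `(2/(θ−2), ((θ−2)/(θ−1))^θ)`. -/
theorem magnitude_propensity_pareto
    (θ : ℝ) (hθ : 2 < θ) (μ : Measure ℝ) [IsProbabilityMeasure μ]
    (hsurv : ∀ x : ℝ, 0 ≤ x → μ (Set.Ioi x) = ENNReal.ofReal ((1 + x) ^ (-θ))) :
    (∀ a : ℝ, 0 ≤ a →
      (∫ x in Set.Ioi a, x ∂μ) / (μ (Set.Ioi a)).toReal = θ / (θ - 1) * (1 + a) - 1) ∧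
    (∀ a : ℝ, 0 ≤ a →
      (2 * a = (∫ x in Set.Ioi a, x ∂μ) / (μ (Set.Ioi a)).toReal ↔ a = 1 / (θ - 2))) ∧
    (2 * (1 / (θ - 2)) = 2 / (θ - 2) ∧
      μ (Set.Ioi (1 / (θ - 2))) = ENNReal.ofReal (((θ - 2) / (θ - 1)) ^ θ)) :=
  magnitude_propensity_pareto_general θ hθ μ hsurv
end

section
/- Let X ≥ 0 be a random variable with E[X²] < ∞, and define the objective L(m) = E[min(X², (X−m)²)]. If m_X > 0 is a local minimizer of L, then P(X = m_X/2) = 0 and E[(m_X − X)·1_{X > m_X/2}] = 0; equivalently, setting a = m_X/2, one has 2a = E[X | X > a] whenever P(X > a) > 0. -/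
/-!
Moving the center from `m` to `m + h` changes the distortion only on the cell where `X` is quantized
to `m`, and there by at most `h² + 2h(m − X)`; the boundary `{X = m/2}` may be counted in either
cell. Counting it in the cell of `0` for `h > 0` and in the cell of `m` for `h < 0`, local
minimality gives `∫_{X > m/2} (m − X) ≥ 0` and `∫_{X ≥ m/2} (m − X) ≤ 0`. The second integral
exceeds the first by `(m/2) · P(X = m/2) ≥ 0`, so both terms vanish.
-/

open MeasureTheory Filter Topology Set

noncomputable def distortion {Ω : Type*} [MeasurableSpace Ω] (P : Measure Ω) (X : Ω → ℝ)
    (m : ℝ) : ℝ :=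
  ∫ ω, min (X ω ^ 2) ((X ω - m) ^ 2) ∂P

lemma nonneg_of_eventually_nonneg_sq_mul_add_mul {b c : ℝ}
    (h : ∀ᶠ t in 𝓝[>] (0 : ℝ), 0 ≤ t ^ 2 * c + t * b) : 0 ≤ b := by
  have hlim : Tendsto (fun t : ℝ => t * c + b) (𝓝[>] 0) (𝓝 b) :=
    ((continuous_mul_const c).add continuous_const).tendsto' 0 b (by simp)
      |>.mono_left nhdsWithin_le_nhds
  refine ge_of_tendsto hlim ?_
  filter_upwards [h, self_mem_nhdsWithin] with t ht (htpos : 0 < t)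
  exact nonneg_of_mul_nonneg_right (by linarith) htpos

lemma IsLocalMin.eventually_le_add_mul {f : ℝ → ℝ} {x : ℝ} (hf : IsLocalMin f x) (v : ℝ) :
    ∀ᶠ t in 𝓝[>] (0 : ℝ), f x ≤ f (x + t * v) := by
  have : Tendsto (fun t : ℝ => x + t * v) (𝓝 0) (𝓝 x) :=
    (continuous_const.add (continuous_mul_const v)).tendsto' 0 x (by simp)
  exact (this.mono_left nhdsWithin_le_nhds).eventually hf

lemma min_sq_sub_min_sq_le_indicator {m x : ℝ} (hm : 0 ≤ m) (h : ℝ) {S : Set ℝ}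
    (hS : Ioi (m / 2) ⊆ S) (hS' : S ⊆ Ici (m / 2)) :
    min (x ^ 2) ((x - (m + h)) ^ 2) - min (x ^ 2) ((x - m) ^ 2) ≤
      S.indicator (fun x => h ^ 2 + 2 * h * (m - x)) x := by
  by_cases hx : x ∈ S
  · have hxm : m / 2 ≤ x := hS' hx
    rw [indicator_of_mem hx, min_eq_right (by nlinarith : (x - m) ^ 2 ≤ x ^ 2)]
    nlinarith [min_le_right (x ^ 2) ((x - (m + h)) ^ 2)]
  · have hxm : x ≤ m / 2 := not_lt.mp fun hlt => hx (hS hlt)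
    rw [indicator_of_notMem hx, min_eq_left (by nlinarith : x ^ 2 ≤ (x - m) ^ 2)]
    linarith [min_le_left (x ^ 2) ((x - (m + h)) ^ 2)]

section

variable {Ω : Type*} [MeasurableSpace Ω] {P : Measure Ω} {X : Ω → ℝ}

lemma integrable_min_sq_sub_sq (hXm : Measurable X) (hX2 : MemLp X 2 P) (m : ℝ) :
    Integrable (fun ω => min (X ω ^ 2) ((X ω - m) ^ 2)) P :=
  hX2.integrable_sq.mono' (by fun_prop) <| ae_of_all _ fun ω => by
    rw [Real.norm_of_nonneg (le_min (sq_nonneg _) (sq_nonneg _))]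
    exact min_le_left _ _

variable [IsFiniteMeasure P]

lemma distortion_add_sub_le (hXm : Measurable X) (hX2 : MemLp X 2 P) {m : ℝ} (hm : 0 ≤ m)
    (h : ℝ) {S : Set ℝ} (hSm : MeasurableSet S) (hS : Ioi (m / 2) ⊆ S)
    (hS' : S ⊆ Ici (m / 2)) :
    distortion P X (m + h) - distortion P X m ≤
      h ^ 2 * P.real (X ⁻¹' S) + 2 * h * ∫ ω in X ⁻¹' S, (m - X ω) ∂P := by
  have hX1 : Integrable X P := hX2.integrable one_le_two
  have hmX : Integrable (fun ω => 2 * h * (m - X ω)) P :=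
    ((integrable_const m).sub hX1).const_mul _
  have hgain : Integrable (fun ω => h ^ 2 + 2 * h * (m - X ω)) P :=
    (integrable_const _).add hmX
  calc distortion P X (m + h) - distortion P X m
      = ∫ ω, (min (X ω ^ 2) ((X ω - (m + h)) ^ 2) - min (X ω ^ 2) ((X ω - m) ^ 2)) ∂P :=
        (integral_sub (integrable_min_sq_sub_sq hXm hX2 _)
          (integrable_min_sq_sub_sq hXm hX2 _)).symm
    _ ≤ ∫ ω, (X ⁻¹' S).indicator (fun ω => h ^ 2 + 2 * h * (m - X ω)) ω ∂P :=
        integral_mono ((integrable_min_sq_sub_sq hXm hX2 _).sub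
          (integrable_min_sq_sub_sq hXm hX2 _)) (hgain.indicator (hXm hSm)) fun _ =>
          (min_sq_sub_min_sq_le_indicator hm h hS hS').trans_eq (indicator_comp_right X).symm
    _ = h ^ 2 * P.real (X ⁻¹' S) + 2 * h * ∫ ω in X ⁻¹' S, (m - X ω) ∂P := by
        rw [integral_indicator (hXm hSm), integral_add (integrable_const _) hmX.integrableOn,
          setIntegral_const, integral_const_mul, smul_eq_mul, mul_comm]

lemma setIntegral_preimage_Ioi_sub_nonneg (hXm : Measurable X) (hX2 : MemLp X 2 P) {m : ℝ}
    (hm : 0 ≤ m) (hmin : IsLocalMin (distortion P X) m) :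
    0 ≤ ∫ ω in X ⁻¹' Ioi (m / 2), (m - X ω) ∂P := by
  suffices 0 ≤ 2 * ∫ ω in X ⁻¹' Ioi (m / 2), (m - X ω) ∂P by linarith
  refine nonneg_of_eventually_nonneg_sq_mul_add_mul (c := P.real (X ⁻¹' Ioi (m / 2))) ?_
  filter_upwards [hmin.eventually_le_add_mul 1] with t ht
  have := distortion_add_sub_le hXm hX2 hm (t * 1) measurableSet_Ioi subset_rfl
    Ioi_subset_Ici_self
  linarith

lemma setIntegral_preimage_Ici_sub_nonpos (hXm : Measurable X) (hX2 : MemLp X 2 P) {m : ℝ}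
    (hm : 0 ≤ m) (hmin : IsLocalMin (distortion P X) m) :
    ∫ ω in X ⁻¹' Ici (m / 2), (m - X ω) ∂P ≤ 0 := by
  suffices 0 ≤ -2 * ∫ ω in X ⁻¹' Ici (m / 2), (m - X ω) ∂P by linarith
  refine nonneg_of_eventually_nonneg_sq_mul_add_mul (c := P.real (X ⁻¹' Ici (m / 2))) ?_
  filter_upwards [hmin.eventually_le_add_mul (-1)] with t ht
  have := distortion_add_sub_le hXm hX2 hm (t * -1) measurableSet_Ici Ioi_subset_Ici_self
    subset_rfl
  linarith

lemma setIntegral_preimage_Ici_sub_eq (hXm : Measurable X) (hX1 : Integrable X P) (m a : ℝ) :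
    ∫ ω in X ⁻¹' Ici a, (m - X ω) ∂P =
      ∫ ω in X ⁻¹' Ioi a, (m - X ω) ∂P + (m - a) * P.real (X ⁻¹' {a}) := by
  have hint : Integrable (fun ω => m - X ω) P := (integrable_const m).sub hX1
  rw [← Ioi_union_left, preimage_union, setIntegral_union
    (Disjoint.preimage X (s := Ioi a) (t := {a}) (by simp))
    (hXm (measurableSet_singleton a)) hint.integrableOn hint.integrableOn,
    setIntegral_congr_fun (hXm (measurableSet_singleton a)) (g := fun _ => m - a)
      fun ω (hω : X ω = a) => by rw [hω],
    setIntegral_const, smul_eq_mul, mul_comm]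

end

theorem local_min_distortion_first_order_general
    {Ω : Type*} [MeasurableSpace Ω] (P : Measure Ω) [IsProbabilityMeasure P]
    (X : Ω → ℝ) (hXm : Measurable X) (hX2 : MemLp X 2 P)
    (L : ℝ → ℝ)
    (hL : ∀ m, L m = ∫ ω, min ((X ω) ^ 2) ((X ω - m) ^ 2) ∂P)
    (m_X : ℝ) (hm : 0 < m_X) (hmin : IsLocalMin L m_X) :
    P {ω | X ω = m_X / 2} = 0 ∧
    (∫ ω in {ω | m_X / 2 < X ω}, (m_X - X ω) ∂P) = 0 ∧
    (P {ω | m_X / 2 < X ω} ≠ 0 →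
      2 * (m_X / 2) =
        (∫ ω in {ω | m_X / 2 < X ω}, X ω ∂P) / (P {ω | m_X / 2 < X ω}).toReal) := by
  obtain rfl : L = distortion P X := funext hL
  have hX1 : Integrable X P := hX2.integrable one_le_two
  have hgt := setIntegral_preimage_Ioi_sub_nonneg hXm hX2 hm.le hmin
  have hge := setIntegral_preimage_Ici_sub_nonpos hXm hX2 hm.le hmin
  rw [setIntegral_preimage_Ici_sub_eq hXm hX1] at hge
  have hatom : 0 ≤ P.real (X ⁻¹' {m_X / 2}) := measureReal_nonneg
  have hgt0 : ∫ ω in X ⁻¹' Ioi (m_X / 2), (m_X - X ω) ∂P = 0 := by nlinarith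
  have hatom0 : P.real (X ⁻¹' {m_X / 2}) = 0 := by nlinarith
  refine ⟨(measureReal_eq_zero_iff).mp hatom0, hgt0, fun hpos => ?_⟩
  rw [integral_sub (integrable_const _) hX1.integrableOn, setIntegral_const, smul_eq_mul,
    sub_eq_zero] at hgt0
  have hpos' : P.real (X ⁻¹' Ioi (m_X / 2)) ≠ 0 := (measureReal_ne_zero_iff).mpr hpos
  change _ = (∫ ω in X ⁻¹' Ioi (m_X / 2), X ω ∂P) / P.real (X ⁻¹' Ioi (m_X / 2))
  rw [← hgt0]
  field_simp

/-- First-order conditions for the constrained two-point quantization: if `m_X > 0` is a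
local minimizer of `L(m) = E[min(X², (X−m)²)]`, then `P(X = m_X/2) = 0`,
`E[(m_X − X)·1_{X > m_X/2}] = 0`, and, with `a = m_X/2`, `2a = E[X | X > a]` whenever
`P(X > a) > 0`. -/
theorem local_min_distortion_first_order
    {Ω : Type*} [MeasurableSpace Ω] (P : Measure Ω) [IsProbabilityMeasure P]
    (X : Ω → ℝ) (hXm : Measurable X) (hX0 : ∀ ω, 0 ≤ X ω) (hX2 : MemLp X 2 P)
    (L : ℝ → ℝ)
    (hL : ∀ m, L m = ∫ ω, min ((X ω) ^ 2) ((X ω - m) ^ 2) ∂P)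
    (m_X : ℝ) (hm : 0 < m_X) (hmin : IsLocalMin L m_X) :
    P {ω | X ω = m_X / 2} = 0 ∧
    (∫ ω in {ω | m_X / 2 < X ω}, (m_X - X ω) ∂P) = 0 ∧
    (P {ω | m_X / 2 < X ω} ≠ 0 →
      2 * (m_X / 2) =
        (∫ ω in {ω | m_X / 2 < X ω}, X ω ∂P) / (P {ω | m_X / 2 < X ω}).toReal) :=
  local_min_distortion_first_order_general P X hXm hX2 L hL m_X hm hmin
end

section
/- Let X ≥ 0 be integrable with continuous distribution function F and density f continuous at a point a = Q(1−p) with f(a) > 0, and suppose (m, p) with m = 2a satisfies the first-order conditions m = 2Q(1−p) and m p = ∫_{1−p}^1 Q(t)dt. If additionally a f(a) < 2(1 − F(a)), then the Hessian of ψ(m,p) = E[X²] + m²p − 2m∫_{1−p}^1 Q(t)dt at (m,p) is positive definite, so (m,p) is a strict local minimum. -/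
/-!
Write `t₀ = 1 - p`. Since `F` is continuous, `F (Q t₀) = t₀`, so the hypothesis reads
`a f(a) < 2p`; and `a > 0` because `f > 0` near `a` while `X ≥ 0`. This is the determinant
condition for the Hessian. For the local minimum pick `K` with `a < 2pK` and `K f(a) < 1`.
Near `a` the density is below `1/K`, so `Q` grows at rate at least `K` near `t₀`:
`K (t - t₀)² ≤ (t - t₀) (Q t - Q t₀)`. Integrating, `G p' = ∫_{1-p'}^1 Q` satisfies
`G p' ≤ G p + a (p' - p) - K (p' - p)² / 2`, whence
`ψ(m', p') - ψ(m, p) ≥ p' u² + m u v + m' K v²` for `(u, v) = (m' - m, p' - p)`, a quadratic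
form that stays positive definite near `(m, p)` because `m² < 4 p m K`.
-/

open MeasureTheory ProbabilityTheory Set Filter Topology

lemma quadratic_form_pos {A B C u v : ℝ} (hA : 0 < A) (hdisc : B ^ 2 < 4 * A * C)
    (huv : u ≠ 0 ∨ v ≠ 0) : 0 < A * u ^ 2 + B * u * v + C * v ^ 2 := by
  rcases eq_or_ne v 0 with rfl | hv
  · have : 0 < u ^ 2 := by simpa [sq_pos_iff] using huv
    nlinarith
  · have : 0 < v ^ 2 := by positivity
    nlinarith [sq_nonneg (2 * A * u + B * v)]

theorem Matrix.posDef_fin_two_of_sq_lt {A B C : ℝ} (hA : 0 < A) (hdet : B ^ 2 < A * C) :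
    Matrix.PosDef !![A, B; B, C] := by
  refine Matrix.PosDef.of_dotProduct_mulVec_pos ?_ fun x hx => ?_
  · ext i j
    fin_cases i <;> fin_cases j <;> rfl
  · have hx' : x 0 ≠ 0 ∨ x 1 ≠ 0 := by
      by_contra! h
      exact hx (by ext i; fin_cases i <;> simp [h])
    have := quadratic_form_pos hA (B := 2 * B) (C := C) (by linarith) hx'
    simp only [dotProduct, Matrix.mulVec, Fin.sum_univ_two, Matrix.of_apply, Matrix.cons_val',
      Matrix.cons_val_zero, Matrix.cons_val_one, Matrix.empty_val', Matrix.cons_val_fin_one,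
      star_trivial]
    linarith

lemma integral_le_of_sq_le_mul_sub {g : ℝ → ℝ} {x c K : ℝ}
    (hg : IntervalIntegrable g volume x c)
    (hgrowth : ∀ t ∈ uIcc x c, K * (t - c) ^ 2 ≤ (t - c) * (g t - g c)) :
    ∫ t in x..c, g t ≤ (c - x) * g c - K * (c - x) ^ 2 / 2 := by
  have hsplit : ∫ t in x..c, (g t - (g c + K * (t - c)))
      = (∫ t in x..c, g t) - ((c - x) * g c - K * (c - x) ^ 2 / 2) := by
    rw [intervalIntegral.integral_sub hg (by apply Continuous.intervalIntegrable; fun_prop),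
      intervalIntegral.integral_add intervalIntegrable_const
        (by apply Continuous.intervalIntegrable; fun_prop),
      intervalIntegral.integral_const_mul, intervalIntegral.integral_comp_sub_right (fun t => t),
      integral_id, intervalIntegral.integral_const, smul_eq_mul]
    ring
  have hneg : ∫ t in x..c, (g t - (g c + K * (t - c))) ≤ 0 := by
    rcases le_total x c with hxc | hcx
    · rw [← neg_nonneg, ← intervalIntegral.integral_neg]
      refine intervalIntegral.integral_nonneg hxc fun t ht => ?_
      rcases ht.2.eq_or_lt with rfl | htc
      · simp
      · nlinarith [hgrowth t (Icc_subset_uIcc ht)]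
    · rw [intervalIntegral.integral_symm, neg_nonpos]
      refine intervalIntegral.integral_nonneg hcx fun t ht => ?_
      rcases ht.1.eq_or_lt with rfl | hct
      · simp
      · nlinarith [hgrowth t (Icc_subset_uIcc' ht)]
  linarith

lemma strict_local_min_of_tail_bound {G : ℝ → ℝ} {m p K : ℝ} (hm : 0 < m) (hp : 0 < p)
    (hdisc : m ^ 2 < 4 * p * (m * K)) (hGp : G p = m * p)
    (hG : ∀ᶠ p' in 𝓝 p, G p' ≤ m * p + (p' - p) * (m / 2) - K * (p' - p) ^ 2 / 2) :
    ∃ ε > 0, ∀ z ∈ Metric.ball (m, p) ε, z ≠ (m, p) →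
      m ^ 2 * p - 2 * m * G p < z.1 ^ 2 * z.2 - 2 * z.1 * G z.2 := by
  have hnear : ∀ᶠ z : ℝ × ℝ in 𝓝 (m, p), 0 < z.1 ∧ 0 < z.2 ∧ m ^ 2 < 4 * z.2 * (z.1 * K) ∧
      G z.2 ≤ m * p + (z.2 - p) * (m / 2) - K * (z.2 - p) ^ 2 / 2 :=
    ((continuous_fst.tendsto _).eventually (lt_mem_nhds hm)).and <|
      ((continuous_snd.tendsto _).eventually (lt_mem_nhds hp)).and <|
      ((by fun_prop : Continuous fun z : ℝ × ℝ => 4 * z.2 * (z.1 * K)).continuousAt.eventually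
        (lt_mem_nhds hdisc)).and ((continuous_snd.tendsto (m, p)).eventually hG)
  obtain ⟨ε, hε, hball⟩ := Metric.eventually_nhds_iff_ball.1 hnear
  refine ⟨ε, hε, fun ⟨m', p'⟩ hz hne => ?_⟩
  obtain ⟨hm', hp', hdisc', hG'⟩ := hball _ hz
  have huv : m' - m ≠ 0 ∨ p' - p ≠ 0 := by
    by_contra! h
    exact hne (Prod.ext (sub_eq_zero.1 h.1) (sub_eq_zero.1 h.2))
  rw [hGp]
  nlinarith [quadratic_form_pos hp' hdisc' huv, mul_le_mul_of_nonneg_left hG' hm'.le]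

namespace ProbabilityTheory

noncomputable def quantile (μ : Measure ℝ) (t : ℝ) : ℝ := sInf {x | ENNReal.ofReal t ≤ μ (Iic x)}

variable {μ : Measure ℝ} {f : ℝ → ℝ}

lemma lt_of_measure_Iio_eq_zero (hμ : μ = volume.withDensity fun x => ENNReal.ofReal (f x))
    {a b : ℝ} (hfc : ContinuousAt f a) (hfa : 0 < f a) (hb : μ (Iio b) = 0) : b < a := by
  by_contra! hab
  obtain ⟨δ, hδ, hfδ⟩ :=
    Metric.eventually_nhds_iff.1 (hfc.eventually (lt_mem_nhds (half_lt_self hfa)))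
  have hpos : 0 < μ (Ioo (a - δ) a) := calc
    0 < ∫⁻ _ in Ioo (a - δ) a, ENNReal.ofReal (f a / 2) := by
      rw [setLIntegral_const, Real.volume_Ioo]
      exact ENNReal.mul_pos (by simpa using hfa) (by simpa using hδ)
    _ ≤ ∫⁻ z in Ioo (a - δ) a, ENNReal.ofReal (f z) :=
      setLIntegral_mono' measurableSet_Ioo fun z hz => ENNReal.ofReal_le_ofReal
        (hfδ (by rw [Real.dist_eq, abs_of_neg (by linarith [hz.2])]; linarith [hz.1])).le
    _ = μ (Ioo (a - δ) a) := by rw [hμ, withDensity_apply _ measurableSet_Ioo]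
  exact hpos.ne' (measure_mono_null (fun z hz => lt_of_lt_of_le hz.2 hab) hb)

variable [IsProbabilityMeasure μ]

lemma quantile_eq_sInf_cdf (t : ℝ) : quantile μ t = sInf {x | t ≤ cdf μ x} := by
  simp_rw [quantile, cdf_eq_real, measureReal_def,
    ENNReal.ofReal_le_iff_le_toReal (measure_ne_top μ _)]

lemma quantile_le_iff {t : ℝ} (ht : t ∈ Ioo 0 1) (x : ℝ) : quantile μ t ≤ x ↔ t ≤ cdf μ x := by
  set S := {x | t ≤ cdf μ x}
  have hne : S.Nonempty :=
    (((tendsto_cdf_atTop μ).eventually (lt_mem_nhds ht.2)).exists).imp fun _ h => h.le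
  have hbdd : BddBelow S := by
    obtain ⟨x₀, hx₀⟩ := ((tendsto_cdf_atBot μ).eventually (gt_mem_nhds ht.1)).exists_forall_of_atBot
    exact ⟨x₀, fun x hx => le_of_not_gt fun hlt => (hx₀ x hlt.le).not_ge hx⟩
  -- right-continuity of the cdf puts the infimum into `S`
  have hmem : sInf S ∈ S := by
    refine ge_of_tendsto (((cdf μ).right_continuous _).mono Ioi_subset_Ici_self) ?_
    filter_upwards [self_mem_nhdsWithin] with x hx
    obtain ⟨y, hy, hyx⟩ := exists_lt_of_csInf_lt hne hx
    exact hy.trans ((cdf μ).mono hyx.le)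
  rw [quantile_eq_sInf_cdf]
  exact ⟨fun h => hmem.trans ((cdf μ).mono h), fun h => csInf_le hbdd h⟩

lemma monotoneOn_quantile : MonotoneOn (quantile μ) (Ioo 0 1) := fun _ hs _ ht hst =>
  (quantile_le_iff hs _).2 (hst.trans ((quantile_le_iff ht _).1 le_rfl))

lemma cdf_quantile (hF : Continuous (cdf μ)) {t : ℝ} (ht : t ∈ Ioo 0 1) :
    cdf μ (quantile μ t) = t := by
  refine le_antisymm ?_ ((quantile_le_iff ht _).1 le_rfl)
  refine le_of_tendsto
    (hF.continuousAt.tendsto.mono_left (nhdsWithin_le_nhds (s := Iio (quantile μ t)))) ?_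
  filter_upwards [self_mem_nhdsWithin] with x (hx : x < quantile μ t)
  exact (not_le.1 fun h => hx.not_ge ((quantile_le_iff ht x).2 h)).le

lemma abs_cdf_sub_le_of_density_le (hμ : μ = volume.withDensity fun x => ENNReal.ofReal (f x))
    {C x y : ℝ} (hC : 0 ≤ C) (hf : ∀ z ∈ uIcc x y, f z ≤ C) :
    |cdf μ y - cdf μ x| ≤ C * |y - x| := by
  wlog hxy : x ≤ y generalizing x y
  · rw [abs_sub_comm, abs_sub_comm y]
    exact this (fun z hz => hf z (uIcc_comm x y ▸ hz)) (le_of_not_ge hxy)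
  have hmeas : μ (Ioc x y) ≤ ENNReal.ofReal (C * (y - x)) := calc
    μ (Ioc x y) = ∫⁻ z in Ioc x y, ENNReal.ofReal (f z) := by
      rw [hμ, withDensity_apply _ measurableSet_Ioc]
    _ ≤ ∫⁻ _ in Ioc x y, ENNReal.ofReal C := setLIntegral_mono' measurableSet_Ioc fun z hz =>
      ENNReal.ofReal_le_ofReal (hf z (Icc_subset_uIcc (Ioc_subset_Icc_self hz)))
    _ = ENNReal.ofReal (C * (y - x)) := by
      rw [setLIntegral_const, Real.volume_Ioc, ← ENNReal.ofReal_mul hC]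
  rw [← measure_cdf μ, StieltjesFunction.measure_Ioc,
    ENNReal.ofReal_le_ofReal_iff (mul_nonneg hC (sub_nonneg.2 hxy))] at hmeas
  rwa [abs_of_nonneg (sub_nonneg.2 ((cdf μ).mono hxy)), abs_of_nonneg (sub_nonneg.2 hxy)]

lemma eventually_sq_le_mul_quantile_sub
    (hμ : μ = volume.withDensity fun x => ENNReal.ofReal (f x)) (hF : Continuous (cdf μ))
    {t₀ K : ℝ} (ht₀ : t₀ ∈ Ioo 0 1) (hfc : ContinuousAt f (quantile μ t₀)) (hK : 0 < K)
    (hKf : f (quantile μ t₀) < K⁻¹) :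
    ∀ᶠ t in 𝓝 t₀, K * (t - t₀) ^ 2 ≤ (t - t₀) * (quantile μ t - quantile μ t₀) := by
  set a := quantile μ t₀
  obtain ⟨ε, hε, hfε⟩ := Metric.eventually_nhds_iff.1 (hfc.eventually (gt_mem_nhds hKf))
  filter_upwards [Ioo_mem_nhds ht₀.1 ht₀.2, Metric.ball_mem_nhds t₀ (div_pos hε hK)]
    with t ht htε
  set y := quantile μ t
  have hsign : 0 ≤ (t - t₀) * (y - a) := by
    rcases le_total t t₀ with htt | htt
    · exact mul_nonneg_of_nonpos_of_nonpos (sub_nonpos.2 htt)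
        (sub_nonpos.2 (monotoneOn_quantile ht ht₀ htt))
    · exact mul_nonneg (sub_nonneg.2 htt) (sub_nonneg.2 (monotoneOn_quantile ht₀ ht htt))
  -- either `y` is close to `a`, where the cdf is `K⁻¹`-Lipschitz, or `|y - a| ≥ ε > K |t - t₀|`
  have hlen : K * |t - t₀| ≤ |y - a| := by
    by_cases hya : |y - a| < ε
    · have := abs_cdf_sub_le_of_density_le hμ (inv_nonneg.2 hK.le) (x := a) (y := y)
        fun z hz => (hfε ((abs_sub_left_of_mem_uIcc hz).trans_lt hya)).le
      rwa [cdf_quantile hF ht, cdf_quantile hF ht₀, le_inv_mul_iff₀ hK] at this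
    · rw [Metric.mem_ball, Real.dist_eq, lt_div_iff₀ hK] at htε
      linarith [not_lt.1 hya]
  calc K * (t - t₀) ^ 2 = |t - t₀| * (K * |t - t₀|) := by rw [← sq_abs]; ring
    _ ≤ |t - t₀| * |y - a| := by gcongr
    _ = (t - t₀) * (y - a) := by rw [← abs_mul, abs_of_nonneg hsign]

lemma eventually_integral_le_of_eqOn_quantile
    (hμ : μ = volume.withDensity fun x => ENNReal.ofReal (f x)) (hF : Continuous (cdf μ))
    {Q : ℝ → ℝ} (hQ : EqOn Q (quantile μ) (Ioo 0 1)) {t₀ K : ℝ} (ht₀ : t₀ ∈ Ioo 0 1)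
    (hfc : ContinuousAt f (Q t₀)) (hK : 0 < K) (hKf : f (Q t₀) < K⁻¹)
    (hint : IntervalIntegrable Q volume t₀ 1) :
    ∀ᶠ x in 𝓝 t₀,
      ∫ t in x..1, Q t ≤ (∫ t in t₀..1, Q t) + (t₀ - x) * Q t₀ - K * (t₀ - x) ^ 2 / 2 := by
  rw [hQ ht₀] at hfc hKf ⊢
  obtain ⟨δ, hδ, hgrowth⟩ := Metric.eventually_nhds_iff_ball.1
    ((eventually_sq_le_mul_quantile_sub hμ hF ht₀ hfc hK hKf).and (Ioo_mem_nhds ht₀.1 ht₀.2))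
  filter_upwards [Metric.ball_mem_nhds t₀ hδ] with x hx
  have hsub : uIcc x t₀ ⊆ Metric.ball t₀ δ :=
    (convex_iff_ordConnected.1 (convex_ball t₀ δ)).uIcc_subset hx (Metric.mem_ball_self hδ)
  have hEq : EqOn Q (quantile μ) (uIcc x t₀) := fun t ht => hQ (hgrowth t (hsub ht)).2
  have hint' : IntervalIntegrable Q volume x t₀ := MonotoneOn.intervalIntegrable <|
    (monotoneOn_quantile.mono fun t ht => (hgrowth t (hsub ht)).2).congr hEq.symm
  have := integral_le_of_sq_le_mul_sub hint' fun t ht => by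
    rw [hEq ht, hEq right_mem_uIcc]
    exact (hgrowth t (hsub ht)).1
  rw [hEq right_mem_uIcc] at this
  rw [← intervalIntegral.integral_add_adjacent_intervals hint' hint]
  linarith

end ProbabilityTheory

theorem hessian_posdef_strict_local_min_general
    (μ : Measure ℝ) [IsProbabilityMeasure μ]
    (f : ℝ → ℝ)
    (hdens : μ = volume.withDensity (fun x => ENNReal.ofReal (f x)))
    (hsupp : μ (Set.Iio 0) = 0)
    (F : ℝ → ℝ) (hF : ∀ x, F x = (μ (Set.Iic x)).toReal) (hFc : Continuous F)
    (Q : ℝ → ℝ)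
    (hQ : ∀ t ∈ Set.Ioo (0 : ℝ) 1,
      Q t = sInf {x : ℝ | ENNReal.ofReal t ≤ μ (Set.Iic x)})
    (ψ : ℝ → ℝ → ℝ)
    (hψ : ∀ m' p', ψ m' p' =
      (∫ x, x ^ 2 ∂μ) + m' ^ 2 * p' - 2 * m' * ∫ t in (1 - p')..1, Q t)
    (a m p : ℝ) (hp : p ∈ Set.Ioo (0 : ℝ) 1)
    (ha : a = Q (1 - p)) (hfc : ContinuousAt f a) (hfa : 0 < f a)
    (hm : m = 2 * a)
    (hfoc : m * p = ∫ t in (1 - p)..1, Q t)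
    (hcond : a * f a < 2 * (1 - F a)) :
    (Matrix.PosDef
      !![2 * p, 2 * (m - Q (1 - p));
         2 * (m - Q (1 - p)), 2 * m / f (Q (1 - p))]) ∧
    ∃ ε > 0, ∀ z : ℝ × ℝ, z ∈ Metric.ball (m, p) ε → z ≠ (m, p) →
      ψ m p < ψ z.1 z.2 := by
  obtain ⟨hp0, hp1⟩ := hp
  have ht₀ : 1 - p ∈ Ioo (0 : ℝ) 1 := ⟨by linarith, by linarith⟩
  obtain rfl : F = cdf μ := funext fun x => (hF x).trans (cdf_eq_real μ x).symm
  have haq : a = quantile μ (1 - p) := ha.trans (hQ _ ht₀)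
  have hFa : cdf μ a = 1 - p := haq ▸ cdf_quantile hFc ht₀
  have ha0 : 0 < a := lt_of_measure_Iio_eq_zero hdens hfc hfa hsupp
  have hafa : a * f a < 2 * p := by linarith
  rw [← ha]
  refine ⟨Matrix.posDef_fin_two_of_sq_lt (by positivity) ?_, ?_⟩
  · rw [hm, mul_div_assoc', lt_div_iff₀ hfa]
    nlinarith
  obtain ⟨K, hKa, hKf⟩ : ∃ K, a / (2 * p) < K ∧ K < (f a)⁻¹ :=
    exists_between <| by
      rw [div_lt_iff₀ (by positivity), ← div_eq_inv_mul, lt_div_iff₀ hfa]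
      linarith
  have hK : 0 < K := (by positivity : 0 < a / (2 * p)).trans hKa
  have hcenter : m ^ 2 < 4 * p * (m * K) := by
    rw [div_lt_iff₀ (by positivity)] at hKa
    rw [hm]
    nlinarith
  -- the first-order condition forces integrability, since otherwise its right side would be `0`
  have hint₁ : IntervalIntegrable Q volume (1 - p) 1 :=
    intervalIntegral.intervalIntegrable_of_integral_ne_zero
      (by rw [← hfoc]; exact (mul_pos (by linarith) hp0).ne')
  have htail : ∀ᶠ p' in 𝓝 p,
      ∫ t in (1 - p')..1, Q t ≤ m * p + (p' - p) * (m / 2) - K * (p' - p) ^ 2 / 2 := by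
    filter_upwards [((continuous_sub_left 1).tendsto p).eventually
      (eventually_integral_le_of_eqOn_quantile hdens hFc (fun t ht => hQ t ht) ht₀ (ha ▸ hfc) hK
        (ha ▸ (lt_inv_comm₀ hK hfa).1 hKf) hint₁)] with p' hI
    rwa [← ha, ← hfoc, sub_sub_sub_cancel_left, show a = m / 2 by linarith] at hI
  obtain ⟨ε, hε, hmin⟩ := strict_local_min_of_tail_bound (by linarith) hp0 hcenter hfoc.symm htail
  exact ⟨ε, hε, fun z hz hne => by rw [hψ, hψ]; linarith [hmin z hz hne]⟩

/-- Second-order sufficiency: at a critical point `(m,p)` of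
`ψ(m,p) = E[X²] + m²p − 2m∫_{1−p}^1 Q(t)dt` with `a = Q(1−p)`, `m = 2a`, if
`a f(a) < 2(1 − F(a))`, then the Hessian of `ψ` at `(m,p)` is positive definite and
`(m,p)` is a strict local minimum of `ψ`. -/
theorem hessian_posdef_strict_local_min
    (μ : Measure ℝ) [IsProbabilityMeasure μ]
    (f : ℝ → ℝ) (hf0 : ∀ x, 0 ≤ f x)
    (hdens : μ = volume.withDensity (fun x => ENNReal.ofReal (f x)))
    (hsupp : μ (Set.Iio 0) = 0)
    (hX2 : Integrable (fun x : ℝ => x ^ 2) μ)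
    (F : ℝ → ℝ) (hF : ∀ x, F x = (μ (Set.Iic x)).toReal) (hFc : Continuous F)
    (Q : ℝ → ℝ)
    (hQ : ∀ t ∈ Set.Ioo (0 : ℝ) 1,
      Q t = sInf {x : ℝ | ENNReal.ofReal t ≤ μ (Set.Iic x)})
    (ψ : ℝ → ℝ → ℝ)
    (hψ : ∀ m' p', ψ m' p' =
      (∫ x, x ^ 2 ∂μ) + m' ^ 2 * p' - 2 * m' * ∫ t in (1 - p')..1, Q t)
    (a m p : ℝ) (hp : p ∈ Set.Ioo (0 : ℝ) 1)
    (ha : a = Q (1 - p)) (hfc : ContinuousAt f a) (hfa : 0 < f a)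
    (hm : m = 2 * a)
    (hfoc : m * p = ∫ t in (1 - p)..1, Q t)
    (hcond : a * f a < 2 * (1 - F a)) :
    (Matrix.PosDef
      !![2 * p, 2 * (m - Q (1 - p));
         2 * (m - Q (1 - p)), 2 * m / f (Q (1 - p))]) ∧
    ∃ ε > 0, ∀ z : ℝ × ℝ, z ∈ Metric.ball (m, p) ε → z ≠ (m, p) →
      ψ m p < ψ z.1 z.2 :=
  hessian_posdef_strict_local_min_general μ f hdens hsupp F hF hFc Q hQ ψ hψ a m p hp ha hfc hfa hm
    hfoc hcond
end
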